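/- Let $\{b_k\}_{k\ge1}$ be a sequence of nonnegative real numbers and $C>0$, $\sigma\ge2$ an integer, such that for all $k\ge2$, $b_k \le C \sum_{k_1+\cdots+k_\sigma=k,\ k_i\ge1} b_{k_1}\cdots b_{k_\sigma}$. Then $b_k \le b_1 C_0^{k-1}$ for all $k\ge1$, where $C_0 = \frac{\pi^2}{6}(C\sigma^2)^{1/(\sigma-1)} b_1$. -/

import Mathlib

/-!
Induct on the stronger bound `b k ≤ b 1 * C₀ ^ (k - 1) / k ^ 2`. Inserted into the recursion it
leaves the sum of `∏ 1 / kᵢ ^ 2` over the compositions `k₁ + ⋯ + k_σ = k`. By Cauchy–Schwarz,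
`k ^ 2 ≤ σ ∑ kᵢ ^ 2`, so `k ^ 2 ∏ 1 / kᵢ ^ 2 ≤ σ ∑ᵢ ∏_{j ≠ i} 1 / kⱼ ^ 2`; since a composition is
determined by its parts other than the `i`-th, each of these `σ` sums is at most
`(∑ 1 / m ^ 2) ^ (σ - 1) ≤ (π ^ 2 / 6) ^ (σ - 1)`. The composition sum is therefore at most
`σ ^ 2 (π ^ 2 / 6) ^ (σ - 1) / k ^ 2`, and `C₀` is exactly the constant with
`C σ ^ 2 (π ^ 2 / 6) ^ (σ - 1) b 1 ^ (σ - 1) = C₀ ^ (σ - 1)`, which closes the induction.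
-/

open Finset Real

def posAntidiagonalTuple (σ k : ℕ) : Finset (Fin σ → ℕ) :=
  (Nat.antidiagonalTuple σ k).filter fun v => ∀ i, 1 ≤ v i

section posAntidiagonalTuple

variable {σ k : ℕ} {v : Fin σ → ℕ}

theorem mem_posAntidiagonalTuple :
    v ∈ posAntidiagonalTuple σ k ↔ ∑ i, v i = k ∧ ∀ i, 1 ≤ v i := by
  rw [posAntidiagonalTuple, mem_filter, Nat.mem_antidiagonalTuple]

theorem card_le_of_mem_posAntidiagonalTuple (hv : v ∈ posAntidiagonalTuple σ k) : σ ≤ k := by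
  obtain ⟨hsum, hpos⟩ := mem_posAntidiagonalTuple.1 hv
  calc σ = ∑ _i : Fin σ, 1 := by simp
    _ ≤ ∑ i, v i := sum_le_sum fun i _ => hpos i
    _ = k := hsum

theorem sum_sub_one_of_mem_posAntidiagonalTuple (hv : v ∈ posAntidiagonalTuple σ k) :
    ∑ i, (v i - 1) = k - σ := by
  obtain ⟨hsum, hpos⟩ := mem_posAntidiagonalTuple.1 hv
  rw [sum_tsub_distrib _ fun i _ => hpos i, hsum]
  simp

theorem lt_of_mem_posAntidiagonalTuple (hσ : 1 < σ) (hv : v ∈ posAntidiagonalTuple σ k)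
    (i : Fin σ) : v i < k := by
  obtain ⟨hsum, hpos⟩ := mem_posAntidiagonalTuple.1 hv
  obtain ⟨j, hji⟩ : ∃ j, j ≠ i := Fintype.exists_ne_of_one_lt_card (by simpa using hσ) i
  have hpair := sum_le_sum_of_subset (f := v) (subset_univ {i, j})
  rw [sum_pair hji.symm, hsum] at hpair
  have := hpos j
  omega

theorem posAntidiagonalTuple_injOn_removeNth {n : ℕ} (i : Fin (n + 1)) :
    Set.InjOn (Fin.removeNth i) (posAntidiagonalTuple (n + 1) k : Set (Fin (n + 1) → ℕ)) := by
  intro v hv w hw hvw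
  obtain ⟨hv, -⟩ := mem_posAntidiagonalTuple.1 hv
  obtain ⟨hw, -⟩ := mem_posAntidiagonalTuple.1 hw
  have hrest : ∀ j, v (i.succAbove j) = w (i.succAbove j) := congrFun hvw
  rw [Fin.sum_univ_succAbove _ i, Finset.sum_congr rfl fun j _ => hrest j] at hv
  rw [Fin.sum_univ_succAbove _ i] at hw
  funext j
  rcases Fin.eq_self_or_eq_succAbove i j with rfl | ⟨j, rfl⟩
  · omega
  · exact hrest j

end posAntidiagonalTuple

theorem sum_prod_removeNth_inv_sq_le {n : ℕ} (k : ℕ) (i : Fin (n + 1)) :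
    ∑ v ∈ posAntidiagonalTuple (n + 1) k, ∏ j, 1 / (v (i.succAbove j) : ℝ) ^ 2
      ≤ (π ^ 2 / 6) ^ n := by
  classical
  have himage : (posAntidiagonalTuple (n + 1) k).image (Fin.removeNth i)
      ⊆ Fintype.piFinset fun _ => Icc 1 k := by
    simp only [subset_iff, mem_image, Fintype.mem_piFinset, mem_Icc]
    rintro _ ⟨v, hv, rfl⟩ j
    obtain ⟨hsum, hpos⟩ := mem_posAntidiagonalTuple.1 hv
    exact ⟨hpos _, (single_le_sum (f := v) (fun _ _ => Nat.zero_le _) (mem_univ _)).trans_eq hsum⟩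
  calc ∑ v ∈ posAntidiagonalTuple (n + 1) k, ∏ j, 1 / (v (i.succAbove j) : ℝ) ^ 2
      = ∑ w ∈ (posAntidiagonalTuple (n + 1) k).image (Fin.removeNth i), ∏ j, 1 / (w j : ℝ) ^ 2 :=
        (sum_image (f := fun w : Fin n → ℕ => ∏ j, 1 / (w j : ℝ) ^ 2)
          (posAntidiagonalTuple_injOn_removeNth i)).symm
    _ ≤ ∑ w ∈ Fintype.piFinset fun _ => Icc 1 k, ∏ j, 1 / (w j : ℝ) ^ 2 :=
        sum_le_sum_of_subset_of_nonneg himage fun _ _ _ => by positivity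
    _ = (∑ m ∈ Icc 1 k, 1 / (m : ℝ) ^ 2) ^ n :=
        (sum_pow' (Icc 1 k) (fun m : ℕ => 1 / (m : ℝ) ^ 2) n).symm
    _ ≤ (π ^ 2 / 6) ^ n :=
        pow_le_pow_left₀ (by positivity)
          (sum_le_hasSum _ (fun m _ => by positivity) hasSum_zeta_two) n

theorem sq_sum_mul_prod_inv_sq_le {n : ℕ} (x : Fin (n + 1) → ℝ) (hx : ∀ i, x i ≠ 0) :
    (∑ i, x i) ^ 2 * ∏ i, 1 / x i ^ 2
      ≤ (n + 1) * ∑ i : Fin (n + 1), ∏ j, 1 / x (i.succAbove j) ^ 2 := by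
  have hremove : ∀ i, x i ^ 2 * ∏ j, 1 / x j ^ 2 = ∏ j, 1 / x (i.succAbove j) ^ 2 := fun i => by
    rw [Fin.prod_univ_succAbove _ i, ← mul_assoc, mul_one_div_cancel (pow_ne_zero 2 (hx i)),
      one_mul]
  calc (∑ i, x i) ^ 2 * ∏ i, 1 / x i ^ 2 ≤ ((n + 1) * ∑ i, x i ^ 2) * ∏ i, 1 / x i ^ 2 := by
        have hcs := sq_sum_le_card_mul_sum_sq (s := univ) (f := x)
        gcongr
        simpa using hcs
    _ = (n + 1) * ∑ i : Fin (n + 1), ∏ j, 1 / x (i.succAbove j) ^ 2 := by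
        simp only [mul_assoc, sum_mul, hremove]

theorem sq_mul_sum_prod_inv_sq_le {σ : ℕ} (hσ : 0 < σ) (k : ℕ) :
    (k : ℝ) ^ 2 * ∑ v ∈ posAntidiagonalTuple σ k, ∏ i, 1 / (v i : ℝ) ^ 2
      ≤ σ ^ 2 * (π ^ 2 / 6) ^ (σ - 1) := by
  obtain ⟨n, rfl⟩ := Nat.exists_eq_add_one_of_ne_zero hσ.ne'
  calc (k : ℝ) ^ 2 * ∑ v ∈ posAntidiagonalTuple (n + 1) k, ∏ i, 1 / (v i : ℝ) ^ 2
      ≤ ∑ v ∈ posAntidiagonalTuple (n + 1) k,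
          ((n : ℝ) + 1) * ∑ i : Fin (n + 1), ∏ j, 1 / (v (i.succAbove j) : ℝ) ^ 2 := by
        rw [mul_sum]
        refine sum_le_sum fun v hv => ?_
        obtain ⟨hsum, hpos⟩ := mem_posAntidiagonalTuple.1 hv
        have := sq_sum_mul_prod_inv_sq_le (fun i => (v i : ℝ))
          fun i => Nat.cast_ne_zero.2 (Nat.one_le_iff_ne_zero.1 (hpos i))
        rwa [← Nat.cast_sum, hsum] at this
    _ = ((n : ℝ) + 1) * ∑ i : Fin (n + 1), ∑ v ∈ posAntidiagonalTuple (n + 1) k,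
          ∏ j, 1 / (v (i.succAbove j) : ℝ) ^ 2 := by
        rw [← mul_sum, sum_comm]
    _ ≤ ((n : ℝ) + 1) * ∑ _i : Fin (n + 1), (π ^ 2 / 6) ^ n := by
        gcongr with i
        exact sum_prod_removeNth_inv_sq_le k i
    _ = ((n + 1 : ℕ) : ℝ) ^ 2 * (π ^ 2 / 6) ^ (n + 1 - 1) := by
        simp only [sum_const, card_univ, Fintype.card_fin, nsmul_eq_mul, Nat.add_sub_cancel]
        push_cast
        ring

theorem prod_mul_pow_div_sq_of_mem_posAntidiagonalTuple {σ k : ℕ} {v : Fin σ → ℕ}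
    (hv : v ∈ posAntidiagonalTuple σ k) (a D : ℝ) :
    ∏ i, a * D ^ (v i - 1) / (v i : ℝ) ^ 2 = a ^ σ * D ^ (k - σ) * ∏ i, 1 / (v i : ℝ) ^ 2 := by
  simp only [div_eq_mul_one_div (a * _), prod_mul_distrib, prod_const, card_univ,
    Fintype.card_fin, prod_pow_eq_pow_sum, sum_sub_one_of_mem_posAntidiagonalTuple hv]

theorem le_mul_pow_div_sq_of_le_mul_sum_prod {b : ℕ → ℝ} (hb : ∀ k, 0 ≤ b k) {C D : ℝ}
    (hC : 0 ≤ C) (hD : 0 ≤ D) {σ : ℕ} (hσ : 1 < σ)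
    (hCD : C * σ ^ 2 * (π ^ 2 / 6) ^ (σ - 1) * b 1 ^ (σ - 1) ≤ D ^ (σ - 1))
    (hrec : ∀ k, 2 ≤ k → b k ≤ C * ∑ v ∈ posAntidiagonalTuple σ k, ∏ i, b (v i))
    (k : ℕ) (hk : 1 ≤ k) : b k ≤ b 1 * D ^ (k - 1) / (k : ℝ) ^ 2 := by
  have hb1 := hb 1
  induction k using Nat.strong_induction_on with
  | _ k ih =>
  obtain rfl | hk2 : k = 1 ∨ 2 ≤ k := by omega
  · simp
  rcases (posAntidiagonalTuple σ k).eq_empty_or_nonempty with hempty | ⟨v₀, hv₀⟩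
  · have hk0 := hrec k hk2
    rw [hempty, sum_empty, mul_zero] at hk0
    exact hk0.trans (by positivity)
  have hσk : σ ≤ k := card_le_of_mem_posAntidiagonalTuple hv₀
  have hprod : ∀ v ∈ posAntidiagonalTuple σ k,
      ∏ i, b (v i) ≤ b 1 ^ σ * D ^ (k - σ) * ∏ i, 1 / (v i : ℝ) ^ 2 := fun v hv => by
    rw [← prod_mul_pow_div_sq_of_mem_posAntidiagonalTuple hv]
    refine prod_le_prod (fun i _ => hb _) fun i _ => ?_
    exact ih _ (lt_of_mem_posAntidiagonalTuple hσ hv i) ((mem_posAntidiagonalTuple.1 hv).2 i)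
  have hsum : ∑ v ∈ posAntidiagonalTuple σ k, ∏ i, b (v i)
      ≤ b 1 ^ σ * D ^ (k - σ) * ∑ v ∈ posAntidiagonalTuple σ k, ∏ i, 1 / (v i : ℝ) ^ 2 := by
    rw [mul_sum]
    exact sum_le_sum hprod
  have hk0 : (0 : ℝ) < (k : ℝ) ^ 2 := by positivity
  rw [le_div_iff₀ hk0]
  calc b k * (k : ℝ) ^ 2
      ≤ C * (b 1 ^ σ * D ^ (k - σ) * ∑ v ∈ posAntidiagonalTuple σ k, ∏ i, 1 / (v i : ℝ) ^ 2)
          * (k : ℝ) ^ 2 := by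
        grw [hrec k hk2, hsum]
    _ = b 1 * D ^ (k - σ) * (C * b 1 ^ (σ - 1) *
          ((k : ℝ) ^ 2 * ∑ v ∈ posAntidiagonalTuple σ k, ∏ i, 1 / (v i : ℝ) ^ 2)) := by
        rw [← pow_sub_one_mul (n := σ) (by omega) (b 1)]
        ring
    _ ≤ b 1 * D ^ (k - σ) * (C * b 1 ^ (σ - 1) * (σ ^ 2 * (π ^ 2 / 6) ^ (σ - 1))) := by
        gcongr _ * (_ * ?_)
        exact sq_mul_sum_prod_inv_sq_le (by omega) k
    _ ≤ b 1 * D ^ (k - σ) * D ^ (σ - 1) := by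
        gcongr
        linarith
    _ = b 1 * D ^ (k - 1) := by
        rw [mul_assoc, ← pow_add]
        congr 2
        omega

/-- If a nonnegative sequence `b` satisfies the multilinear recursion bound
`b k ≤ C * ∑_{k₁+⋯+k_σ = k, kᵢ ≥ 1} b k₁ ⋯ b k_σ` for all `k ≥ 2`, then
`b k ≤ b 1 * C₀ ^ (k-1)` with `C₀ = π²/6 * (C σ²)^(1/(σ-1)) * b 1`. -/
theorem stmt0 (b : ℕ → ℝ) (hb : ∀ k, 0 ≤ b k) (C : ℝ) (hC : 0 < C) (σ : ℕ) (hσ : 2 ≤ σ)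
    (hrec : ∀ k, 2 ≤ k →
      b k ≤ C * ∑ v ∈ (Finset.Nat.antidiagonalTuple σ k).filter (fun v => ∀ i, 1 ≤ v i),
        ∏ i, b (v i)) :
    ∀ k, 1 ≤ k →
      b k ≤ b 1 * (Real.pi ^ 2 / 6 * (C * (σ : ℝ) ^ 2) ^ ((1 : ℝ) / ((σ : ℝ) - 1)) * b 1) ^ (k - 1) := by
  intro k hk
  have hb1 := hb 1
  have hroot : ((C * (σ : ℝ) ^ 2) ^ ((1 : ℝ) / ((σ : ℝ) - 1))) ^ (σ - 1) = C * (σ : ℝ) ^ 2 := by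
    rw [one_div, ← Nat.cast_pred (by omega)]
    exact rpow_inv_natCast_pow (by positivity) (by omega)
  have hCD : C * σ ^ 2 * (π ^ 2 / 6) ^ (σ - 1) * b 1 ^ (σ - 1)
      ≤ (π ^ 2 / 6 * (C * (σ : ℝ) ^ 2) ^ ((1 : ℝ) / ((σ : ℝ) - 1)) * b 1) ^ (σ - 1) := by
    rw [mul_pow, mul_pow, hroot]
    exact le_of_eq (by ring)
  calc b k ≤ b 1 * _ ^ (k - 1) / (k : ℝ) ^ 2 :=
        le_mul_pow_div_sq_of_le_mul_sum_prod hb hC.le (by positivity) hσ hCD hrec k hk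
    _ ≤ _ := div_le_self (by positivity) (one_le_pow₀ (Nat.one_le_cast.2 hk))
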